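/- arXiv:1511.01297 — 5 statements merged into one kernel-verified Lean document; each statement's English description precedes it below -/
import Mathlib

section
/- Every eigenvalue of the Laplacian matrix of a finite directed graph is either zero or has positive real part. -/
open Matrix

/-!
By Gershgorin's circle theorem every eigenvalue of `L` lies in a disc centred at a diagonal entry
`dᵢ = ∑ₖ aᵢₖ ≥ 0` whose radius `∑_{j ≠ i} aᵢⱼ` is at most `dᵢ`. Such a disc lies in the closed
right half-plane and meets the imaginary axis only at `0`.
-/

namespace Complex

theorem eq_zero_or_re_pos_of_norm_sub_le {c : ℝ} {μ : ℂ} (h : ‖μ - c‖ ≤ c) :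
    μ = 0 ∨ 0 < μ.re := by
  rcases eq_or_ne μ 0 with hμ | hμ
  · exact Or.inl hμ
  right
  have hc : 0 ≤ c := (norm_nonneg _).trans h
  have hdisc : (μ.re - c) ^ 2 + μ.im ^ 2 ≤ c ^ 2 := by
    have := pow_le_pow_left₀ (norm_nonneg _) h 2
    rwa [Complex.sq_norm, normSq_apply, sub_re, sub_im, ofReal_re, ofReal_im, sub_zero, ← sq, ← sq]
      at this
  have hμ_sq : 0 < μ.re ^ 2 + μ.im ^ 2 := by
    simpa only [normSq_apply, sq] using normSq_pos.mpr hμ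
  nlinarith

end Complex

namespace Matrix

variable {n : Type*} [Fintype n] [DecidableEq n]

theorem eq_zero_or_re_pos_of_hasEigenvalue_of_sum_abs_le_diag {M : Matrix n n ℝ}
    (hM : ∀ k, ∑ j ∈ Finset.univ.erase k, |M k j| ≤ M k k) {μ : ℂ}
    (hμ : Module.End.HasEigenvalue (toLin' (M.map Complex.ofReal)) μ) :
    μ = 0 ∨ 0 < μ.re := by
  obtain ⟨k, hk⟩ := eigenvalue_mem_ball hμ
  refine Complex.eq_zero_or_re_pos_of_norm_sub_le (c := M k k) ?_
  calc ‖μ - M k k‖ ≤ ∑ j ∈ Finset.univ.erase k, ‖(M k j : ℂ)‖ := by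
        simpa [dist_eq_norm] using hk
    _ = ∑ j ∈ Finset.univ.erase k, |M k j| := by simp only [Complex.norm_real, Real.norm_eq_abs]
    _ ≤ M k k := hM k

def laplacian {R : Type*} [AddCommGroup R] (a : Matrix n n R) : Matrix n n R :=
  fun i j => if i = j then ∑ k, a i k else -a i j

theorem sum_abs_laplacian_offDiag_le_diag {a : Matrix n n ℝ} (ha : ∀ i j, 0 ≤ a i j) (k : n) :
    ∑ j ∈ Finset.univ.erase k, |laplacian a k j| ≤ laplacian a k k := by
  have hoff : ∀ j ∈ Finset.univ.erase k, |laplacian a k j| = a k j := fun j hj => by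
    rw [laplacian, if_neg (Finset.ne_of_mem_erase hj).symm, abs_neg, abs_of_nonneg (ha k j)]
  rw [Finset.sum_congr rfl hoff, laplacian, if_pos rfl]
  exact Finset.sum_le_sum_of_subset_of_nonneg (Finset.erase_subset _ _) fun j _ _ => ha k j

end Matrix

theorem laplacian_eigenvalues_nonneg_re_general (N : ℕ)
    (a : Matrix (Fin N) (Fin N) ℝ)
    (h01 : ∀ i j, a i j = 0 ∨ a i j = 1) :
    let L : Matrix (Fin N) (Fin N) ℝ :=
      fun i j => if i = j then ∑ k, a i k else -a i j
    ∀ μ : ℂ, (∃ v : Fin N → ℂ, v ≠ 0 ∧ (L.map Complex.ofReal) *ᵥ v = μ • v) →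
      μ = 0 ∨ 0 < μ.re := by
  intro L μ ⟨v, hv, hLv⟩
  have ha : ∀ i j, 0 ≤ a i j := fun i j => by rcases h01 i j with h | h <;> simp [h]
  have hμ : Module.End.HasEigenvalue (toLin' ((laplacian a).map Complex.ofReal)) μ :=
    Module.End.hasEigenvalue_of_hasEigenvector
      ⟨Module.End.mem_eigenspace_iff.mpr ((toLin'_apply _ v).trans hLv), hv⟩
  exact eq_zero_or_re_pos_of_hasEigenvalue_of_sum_abs_le_diag
    (sum_abs_laplacian_offDiag_le_diag ha) hμ

/-- Every (complex) eigenvalue of the Laplacian of a finite directed graph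
    is either zero or has positive real part. -/
theorem laplacian_eigenvalues_nonneg_re (N : ℕ)
    (a : Matrix (Fin N) (Fin N) ℝ)
    (hdiag : ∀ i, a i i = 0) (h01 : ∀ i j, a i j = 0 ∨ a i j = 1) :
    let L : Matrix (Fin N) (Fin N) ℝ :=
      fun i j => if i = j then ∑ k, a i k else -a i j
    ∀ μ : ℂ, (∃ v : Fin N → ℂ, v ≠ 0 ∧ (L.map Complex.ofReal) *ᵥ v = μ • v) →
      μ = 0 ∨ 0 < μ.re :=
  laplacian_eigenvalues_nonneg_re_general N a h01
end

section
/- If the Laplacian L of a strongly connected directed graph has left null vector r with all positive entries (r^T L = 0), and R = diag(r), then the matrix L̂ = R·L + L^T·R is symmetric, has all row sums zero, has nonpositive off-diagonal entries, and is positive semidefinite; i.e., L̂ is the Laplacian of an undirected connected graph. -/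
/-!
`L̂ = RL + (RL)ᵀ` is symmetric by construction, and `L̂ 𝟙 = R (L 𝟙) + Lᵀ r = 0` because the
Laplacian has zero row sums and `r` is a left null vector. Its off-diagonal entries
`r_i L_ij + L_ji r_j` are nonpositive since `r > 0` and `L_ij = -a_ij ≤ 0`. Finally, for any
matrix `M` with zero row and column sums, `2 xᵀ M x = -∑ M_ij (x_i - x_j)²`, which is
nonnegative once the off-diagonal entries of `M` are nonpositive.
-/

namespace Matrix

variable {n R : Type*} [Fintype n]

theorem two_mul_dotProduct_mulVec_eq_neg_sum_sq [CommRing R] (M : Matrix n n R)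
    (hrow : M *ᵥ 1 = 0) (hcol : 1 ᵥ* M = 0) (x : n → R) :
    2 * (x ⬝ᵥ M *ᵥ x) = -∑ i, ∑ j, M i j * (x i - x j) ^ 2 := by
  have hrow' : ∀ i, ∑ j, M i j = 0 := fun i => by simpa [mulVec, dotProduct] using congrFun hrow i
  have hcol' : ∀ j, ∑ i, M i j = 0 := fun j => by simpa [vecMul, dotProduct] using congrFun hcol j
  have hsq_left : ∑ i, ∑ j, M i j * x i ^ 2 = 0 := by
    simp [← Finset.sum_mul, hrow']
  have hsq_right : ∑ i, ∑ j, M i j * x j ^ 2 = 0 := by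
    rw [Finset.sum_comm]
    simp [← Finset.sum_mul, hcol']
  have hexpand : ∑ i, ∑ j, M i j * (x i - x j) ^ 2 = ∑ i, ∑ j, M i j * x i ^ 2
      - 2 * (x ⬝ᵥ M *ᵥ x) + ∑ i, ∑ j, M i j * x j ^ 2 := by
    simp only [dotProduct, mulVec, Finset.mul_sum, ← Finset.sum_sub_distrib,
      ← Finset.sum_add_distrib]
    exact Finset.sum_congr rfl fun i _ => Finset.sum_congr rfl fun j _ => by ring
  rw [hexpand, hsq_left, hsq_right]
  ring

theorem posSemidef_of_isSymm_of_mulVec_one_eq_zero [CommRing R] [LinearOrder R]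
    [IsStrictOrderedRing R] [StarRing R] [TrivialStar R] {M : Matrix n n R} (hM : M.IsSymm)
    (hrow : M *ᵥ 1 = 0) (hoff : ∀ i j, i ≠ j → M i j ≤ 0) : M.PosSemidef := by
  have hcol : 1 ᵥ* M = 0 := by rw [← mulVec_transpose, hM.eq, hrow]
  refine posSemidef_iff_dotProduct_mulVec.2 ⟨isHermitian_iff_isSymm.2 hM, fun x => ?_⟩
  have hsum : 0 ≤ -∑ i, ∑ j, M i j * (x i - x j) ^ 2 := by
    refine neg_nonneg.2 (Finset.sum_nonpos fun i _ => Finset.sum_nonpos fun j _ => ?_)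
    rcases eq_or_ne i j with rfl | hij
    · simp
    · exact mul_nonpos_of_nonpos_of_nonneg (hoff i j hij) (sq_nonneg _)
  rw [← two_mul_dotProduct_mulVec_eq_neg_sum_sq M hrow hcol x] at hsum
  rw [star_trivial]
  exact (mul_nonneg_iff_of_pos_left two_pos).1 hsum

variable [DecidableEq n]

theorem diagonal_mulVec_one [NonAssocSemiring R] (v : n → R) : diagonal v *ᵥ 1 = v := by
  ext i
  simp [mulVec_diagonal]

def hatLaplacian [CommRing R] (r : n → R) (L : Matrix n n R) : Matrix n n R :=
  diagonal r * L + Lᵀ * diagonal r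

section CommRing

variable [CommRing R] (r : n → R) (L : Matrix n n R)

theorem hatLaplacian_apply (i j : n) : hatLaplacian r L i j = r i * L i j + L j i * r j := by
  simp [hatLaplacian, diagonal_mul, mul_diagonal]

theorem isSymm_hatLaplacian : (hatLaplacian r L).IsSymm := by
  have : (diagonal r * L)ᵀ = Lᵀ * diagonal r := by rw [transpose_mul, diagonal_transpose]
  simpa only [hatLaplacian, this] using isSymm_add_transpose_self (diagonal r * L)

variable {r L}

theorem hatLaplacian_mulVec_one (hrow : L *ᵥ 1 = 0) (hr : r ᵥ* L = 0) :
    hatLaplacian r L *ᵥ 1 = 0 := by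
  rw [hatLaplacian, add_mulVec, ← mulVec_mulVec, ← mulVec_mulVec, hrow, diagonal_mulVec_one,
    mulVec_transpose, hr, mulVec_zero, add_zero]

end CommRing

section Ordered

variable [CommRing R] [LinearOrder R] [IsStrictOrderedRing R] {r : n → R} {L : Matrix n n R}

theorem hatLaplacian_apply_nonpos (hr : 0 ≤ r) (hoff : ∀ i j, i ≠ j → L i j ≤ 0) {i j : n}
    (hij : i ≠ j) : hatLaplacian r L i j ≤ 0 := by
  rw [hatLaplacian_apply]
  exact add_nonpos (mul_nonpos_of_nonneg_of_nonpos (hr i) (hoff i j hij))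
    (mul_nonpos_of_nonpos_of_nonneg (hoff j i hij.symm) (hr j))

theorem posSemidef_hatLaplacian [StarRing R] [TrivialStar R] (hr : 0 ≤ r)
    (hrow : L *ᵥ 1 = 0) (hrL : r ᵥ* L = 0) (hoff : ∀ i j, i ≠ j → L i j ≤ 0) :
    (hatLaplacian r L).PosSemidef :=
  posSemidef_of_isSymm_of_mulVec_one_eq_zero (isSymm_hatLaplacian r L)
    (hatLaplacian_mulVec_one hrow hrL) fun _ _ => hatLaplacian_apply_nonpos hr hoff

end Ordered

theorem ite_sum_eq_diagonal_sub [CommRing R] {a : Matrix n n R} (hdiag : ∀ i, a i i = 0) :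
    (fun i j => if i = j then ∑ k, a i k else -a i j) = diagonal (a *ᵥ 1) - a := by
  ext i j
  rcases eq_or_ne i j with rfl | hij
  · simp [hdiag, mulVec, dotProduct]
  · simp [hij]

end Matrix

open Matrix

theorem hat_laplacian_properties_general (N : ℕ)
    (a : Matrix (Fin N) (Fin N) ℝ)
    (hdiag : ∀ i, a i i = 0) (h01 : ∀ i j, a i j = 0 ∨ a i j = 1)
    (L : Matrix (Fin N) (Fin N) ℝ)
    (hL : L = fun i j => if i = j then ∑ k, a i k else -a i j)
    (r : Fin N → ℝ) (hr : ∀ i, 0 < r i) (hrL : r ᵥ* L = 0) :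
    let Lhat := Matrix.diagonal r * L + Lᵀ * Matrix.diagonal r
    Lhat.IsSymm ∧ Lhat *ᵥ (fun _ => (1 : ℝ)) = 0 ∧
      (∀ i j, i ≠ j → Lhat i j ≤ 0) ∧ Lhat.PosSemidef := by
  rw [ite_sum_eq_diagonal_sub hdiag] at hL
  subst hL
  have hrow : (diagonal (a *ᵥ 1) - a) *ᵥ 1 = 0 := by
    rw [sub_mulVec, diagonal_mulVec_one, sub_self]
  have hoff : ∀ i j, i ≠ j → (diagonal (a *ᵥ 1) - a) i j ≤ 0 := fun i j hij => by
    rcases h01 i j with h | h <;> simp [hij, h]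
  have hr0 : 0 ≤ r := fun i => (hr i).le
  exact ⟨isSymm_hatLaplacian r _, hatLaplacian_mulVec_one hrow hrL,
    fun _ _ => hatLaplacian_apply_nonpos hr0 hoff, posSemidef_hatLaplacian hr0 hrow hrL hoff⟩

/-- For a strongly connected digraph with Laplacian L and positive left null vector r,
    L̂ = RL + LᵀR (R = diag r) is symmetric, has zero row sums, nonpositive off-diagonal
    entries, and is positive semidefinite: it is the Laplacian of a connected undirected
    graph. -/
theorem hat_laplacian_properties (N : ℕ) (hN : 0 < N)
    (a : Matrix (Fin N) (Fin N) ℝ)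
    (hdiag : ∀ i, a i i = 0) (h01 : ∀ i j, a i j = 0 ∨ a i j = 1)
    (hsc : ∀ i j : Fin N, Relation.ReflTransGen (fun u v => a v u ≠ 0) i j)
    (L : Matrix (Fin N) (Fin N) ℝ)
    (hL : L = fun i j => if i = j then ∑ k, a i k else -a i j)
    (r : Fin N → ℝ) (hr : ∀ i, 0 < r i) (hrL : r ᵥ* L = 0) :
    let Lhat := Matrix.diagonal r * L + Lᵀ * Matrix.diagonal r
    Lhat.IsSymm ∧ Lhat *ᵥ (fun _ => (1 : ℝ)) = 0 ∧
      (∀ i j, i ≠ j → Lhat i j ≤ 0) ∧ Lhat.PosSemidef :=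
  hat_laplacian_properties_general N a hdiag h01 L hL r hr hrL
end

section
/- Let L̂ be a symmetric positive semidefinite N×N Laplacian matrix of a connected undirected graph with smallest nonzero eigenvalue λ₂. Then for any vector ξ with all positive entries and any nonzero x ∈ ℝ^N with ξ^T x = 0, one has (x^T L̂ x)/(x^T x) > λ₂/N. -/
/-!
Write `x = y + c·𝟙` with `c` the mean of `x`. Since `L̂ 𝟙 = 0` and `L̂` is symmetric,
`xᵀ L̂ x = yᵀ L̂ y`, and since the rank condition makes `ker L̂ = ℝ·𝟙 ⟂ y`, expanding `y` in an
orthonormal eigenbasis gives `yᵀ L̂ y ≥ λ₂ ‖y‖²`. On the other hand `ξ > 0` and `ξᵀx = 0` force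
`x` to have entries of both signs; dropping one entry of the sign opposite to `∑ xᵢ` and applying
Cauchy–Schwarz to the remaining `N - 1` entries gives `(∑ xᵢ)² < (N - 1)‖x‖²`, i.e.
`‖x‖² < N ‖y‖²`. As `λ₂ > 0` by positive semidefiniteness, `xᵀ L̂ x / xᵀ x > λ₂ / N`.
-/

open Matrix Finset

variable {n : Type*} [Fintype n]

theorem exists_neg_of_dotProduct_eq_zero {ξ x : n → ℝ} (hξ : ∀ i, 0 < ξ i) (hx : x ≠ 0)
    (hperp : ξ ⬝ᵥ x = 0) : ∃ i, x i < 0 := by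
  by_contra! hnonneg
  refine hx (funext fun i => ?_)
  have hterm := (sum_eq_zero_iff_of_nonneg fun j _ => mul_nonneg (hξ j).le (hnonneg j)).mp
    hperp i (mem_univ i)
  exact (mul_eq_zero.mp hterm).resolve_left (hξ i).ne'

theorem sq_sum_lt_of_neg_of_sum_nonneg [DecidableEq n] {x : n → ℝ} {i₀ : n} (hi₀ : x i₀ < 0)
    (hsum : 0 ≤ ∑ i, x i) : (∑ i, x i) ^ 2 < (Fintype.card n - 1) * ∑ i, x i ^ 2 := by
  have hsplit := add_sum_erase univ x (mem_univ i₀)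
  have hcard : ((univ.erase i₀).card : ℝ) = Fintype.card n - 1 := by
    rw [card_erase_of_mem (mem_univ _), card_univ, Nat.cast_pred (Fintype.card_pos_iff.mpr ⟨i₀⟩)]
  calc (∑ i, x i) ^ 2 < (∑ i ∈ univ.erase i₀, x i) ^ 2 :=
        pow_lt_pow_left₀ (by linarith) hsum two_ne_zero
    _ ≤ (univ.erase i₀).card * ∑ i ∈ univ.erase i₀, x i ^ 2 := sq_sum_le_card_mul_sum_sq
    _ ≤ (Fintype.card n - 1) * ∑ i, x i ^ 2 := by
        rw [hcard]
        gcongr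
        · rw [← hcard]; positivity
        · exact erase_subset _ _

theorem sq_dotProduct_one_lt_of_dotProduct_eq_zero {ξ x : n → ℝ} (hξ : ∀ i, 0 < ξ i)
    (hx : x ≠ 0) (hperp : ξ ⬝ᵥ x = 0) :
    (x ⬝ᵥ 1) ^ 2 < (Fintype.card n - 1) * (x ⬝ᵥ x) := by
  classical
  simp only [dotProduct, Pi.one_apply, mul_one, ← sq]
  rcases le_total 0 (∑ i, x i) with hsum | hsum
  · obtain ⟨i₀, hi₀⟩ := exists_neg_of_dotProduct_eq_zero hξ hx hperp
    exact sq_sum_lt_of_neg_of_sum_nonneg hi₀ hsum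
  · obtain ⟨i₀, hi₀⟩ := exists_neg_of_dotProduct_eq_zero hξ (neg_ne_zero.mpr hx)
      (by rw [dotProduct_neg, hperp, neg_zero])
    simpa using sq_sum_lt_of_neg_of_sum_nonneg hi₀ (by simpa using hsum)

noncomputable def centered (x : n → ℝ) : n → ℝ := x - ((x ⬝ᵥ 1) / Fintype.card n) • 1

section Centered

variable [Nonempty n] (x : n → ℝ)

theorem centered_dotProduct_one : centered x ⬝ᵥ 1 = 0 := by
  have : (Fintype.card n : ℝ) ≠ 0 := Nat.cast_ne_zero.mpr Fintype.card_ne_zero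
  simp only [centered, sub_dotProduct, smul_dotProduct, dotProduct_one 1, Pi.one_apply, sum_const,
    card_univ, nsmul_eq_mul, mul_one, smul_eq_mul]
  field_simp
  ring

theorem centered_dotProduct_self :
    centered x ⬝ᵥ centered x = x ⬝ᵥ x - (x ⬝ᵥ 1) ^ 2 / Fintype.card n := by
  have : (Fintype.card n : ℝ) ≠ 0 := Nat.cast_ne_zero.mpr Fintype.card_ne_zero
  simp only [centered, sub_dotProduct, dotProduct_sub, smul_dotProduct, dotProduct_smul,
    dotProduct_one 1, Pi.one_apply, sum_const, card_univ, nsmul_eq_mul, mul_one, smul_eq_mul,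
    dotProduct_comm 1 x]
  field_simp
  ring

end Centered

theorem dotProduct_self_lt_card_mul_centered {ξ x : n → ℝ} (hξ : ∀ i, 0 < ξ i) (hx : x ≠ 0)
    (hperp : ξ ⬝ᵥ x = 0) : x ⬝ᵥ x < Fintype.card n * (centered x ⬝ᵥ centered x) := by
  obtain ⟨i, -⟩ := Function.ne_iff.mp hx
  have : Nonempty n := ⟨i⟩
  have hcard : (0 : ℝ) < Fintype.card n := Nat.cast_pos.mpr Fintype.card_pos
  have hsq := sq_dotProduct_one_lt_of_dotProduct_eq_zero hξ hx hperp
  rw [centered_dotProduct_self, mul_sub, mul_div_cancel₀ _ hcard.ne']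
  linarith

namespace Matrix

theorem ker_mulVecLin_eq_span_one [Nonempty n] {A : Matrix n n ℝ} (hone : A *ᵥ 1 = 0)
    (hrank : A.rank = Fintype.card n - 1) : LinearMap.ker A.mulVecLin = ℝ ∙ 1 := by
  have hker : Module.finrank ℝ (LinearMap.ker A.mulVecLin) = 1 := by
    have := A.mulVecLin.finrank_range_add_finrank_ker
    rw [Module.finrank_fintype_fun_eq_card] at this
    change A.rank + _ = _ at this
    have := Fintype.card_pos (α := n)
    omega
  refine (Submodule.eq_of_le_of_finrank_le ?_ ?_).symm
  · rwa [Submodule.span_le, Set.singleton_subset_iff]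
  · rw [hker, finrank_span_singleton one_ne_zero]

theorem PosSemidef.nonneg_of_mulVec_eq_smul {A : Matrix n n ℝ} (hA : A.PosSemidef) {μ : ℝ}
    {v : n → ℝ} (hv : v ≠ 0) (hμ : A *ᵥ v = μ • v) : 0 ≤ μ := by
  have hquad := hA.dotProduct_mulVec_nonneg v
  have hnorm : 0 < v ⬝ᵥ v := by simpa using dotProduct_self_star_pos_iff.mpr hv
  rw [star_trivial, hμ, dotProduct_smul, smul_eq_mul] at hquad
  exact nonneg_of_mul_nonneg_left hquad hnorm

namespace IsHermitian

variable {A : Matrix n n ℝ}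

theorem dotProduct_mulVec_comm (hA : A.IsHermitian) (v w : n → ℝ) : v ⬝ᵥ (A *ᵥ w) = (A *ᵥ v) ⬝ᵥ w := by
  rw [dotProduct_mulVec, ← mulVec_transpose, (isHermitian_iff_isSymm.mp hA).eq]

theorem dotProduct_mulVec_sub_smul (hA : A.IsHermitian) {v : n → ℝ} (hv : A *ᵥ v = 0) (x : n → ℝ) (c : ℝ) :
    (x - c • v) ⬝ᵥ (A *ᵥ (x - c • v)) = x ⬝ᵥ (A *ᵥ x) := by
  rw [mulVec_sub, mulVec_smul, hv, smul_zero, sub_zero, sub_dotProduct, smul_dotProduct,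
    hA.dotProduct_mulVec_comm v, hv, zero_dotProduct, smul_zero, sub_zero]

variable [DecidableEq n]

theorem dotProduct_eq_sum_eigenvectorBasis (hA : A.IsHermitian) (v w : n → ℝ) :
    v ⬝ᵥ w = ∑ i, (⇑(hA.eigenvectorBasis i) ⬝ᵥ v) * (⇑(hA.eigenvectorBasis i) ⬝ᵥ w) := by
  have := hA.eigenvectorBasis.sum_inner_mul_inner (WithLp.toLp 2 v) (WithLp.toLp 2 w)
  simp only [EuclideanSpace.inner_eq_star_dotProduct, star_trivial] at this
  rw [dotProduct_comm v w, ← this]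
  simp_rw [dotProduct_comm w]

theorem eigenvectorBasis_dotProduct_mulVec (hA : A.IsHermitian) (i : n) (v : n → ℝ) :
    ⇑(hA.eigenvectorBasis i) ⬝ᵥ (A *ᵥ v) = hA.eigenvalues i * (⇑(hA.eigenvectorBasis i) ⬝ᵥ v) := by
  rw [hA.dotProduct_mulVec_comm, hA.mulVec_eigenvectorBasis, smul_dotProduct, smul_eq_mul]

theorem mul_dotProduct_self_le_of_forall_ker (hA : A.IsHermitian) {lam : ℝ}
    (hlam : lam ∈ lowerBounds {μ | μ ≠ 0 ∧ ∃ v, v ≠ 0 ∧ A *ᵥ v = μ • v}) {y : n → ℝ}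
    (hy : ∀ v, A *ᵥ v = 0 → y ⬝ᵥ v = 0) :
    lam * (y ⬝ᵥ y) ≤ y ⬝ᵥ (A *ᵥ y) := by
  simp only [hA.dotProduct_eq_sum_eigenvectorBasis y, hA.eigenvectorBasis_dotProduct_mulVec,
    mul_sum]
  refine sum_le_sum fun i _ => ?_
  set b := hA.eigenvectorBasis
  by_cases hi : hA.eigenvalues i = 0
  · have hker : A *ᵥ ⇑(b i) = 0 := by rw [hA.mulVec_eigenvectorBasis, hi, zero_smul]
    rw [dotProduct_comm, hy _ hker]
    simp
  · have hbi : ⇑(b i) ≠ 0 := fun h => b.orthonormal.ne_zero i (by ext j; exact congrFun h j)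
    have := hlam ⟨hi, _, hbi, hA.mulVec_eigenvectorBasis i⟩
    nlinarith [mul_self_nonneg (⇑(b i) ⬝ᵥ y)]

end IsHermitian

end Matrix

theorem rayleigh_quotient_bound_general (N : ℕ)
    (Lhat : Matrix (Fin N) (Fin N) ℝ)
    (hpsd : Lhat.PosSemidef)
    (hrow : Lhat *ᵥ (fun _ => (1 : ℝ)) = 0)
    (hrank : Lhat.rank = N - 1)
    (lam2 : ℝ)
    (hlam : IsLeast {μ : ℝ | μ ≠ 0 ∧ ∃ x : Fin N → ℝ, x ≠ 0 ∧ Lhat *ᵥ x = μ • x} lam2)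
    (ξ x : Fin N → ℝ) (hξ : ∀ i, 0 < ξ i) (hx : x ≠ 0) (hperp : ξ ⬝ᵥ x = 0) :
    lam2 / N < (x ⬝ᵥ (Lhat *ᵥ x)) / (x ⬝ᵥ x) := by
  obtain ⟨⟨hlam_ne, v, hv, hveig⟩, hlower⟩ := hlam
  obtain ⟨i, -⟩ := Function.ne_iff.mp hx
  have : Nonempty (Fin N) := ⟨i⟩
  have hlam_pos : 0 < lam2 := (hpsd.nonneg_of_mulVec_eq_smul hv hveig).lt_of_ne' hlam_ne
  have hN : (0 : ℝ) < N := Nat.cast_pos.mpr (Fin.pos i)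
  have hxx : 0 < x ⬝ᵥ x := by simpa using dotProduct_self_star_pos_iff.mpr hx
  set y := centered x
  have hker : ∀ w, Lhat *ᵥ w = 0 → y ⬝ᵥ w = 0 := by
    intro w hw
    have hconst : w ∈ ℝ ∙ 1 := by
      rw [← ker_mulVecLin_eq_span_one hrow (by rwa [Fintype.card_fin])]
      exact hw
    obtain ⟨c, rfl⟩ := Submodule.mem_span_singleton.mp hconst
    rw [dotProduct_smul, centered_dotProduct_one, smul_zero]
  have hquad : y ⬝ᵥ (Lhat *ᵥ y) = x ⬝ᵥ (Lhat *ᵥ x) := hpsd.isHermitian.dotProduct_mulVec_sub_smul hrow x _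
  have hspec := hpsd.isHermitian.mul_dotProduct_self_le_of_forall_ker hlower hker
  have hnorm := dotProduct_self_lt_card_mul_centered hξ hx hperp
  rw [Fintype.card_fin] at hnorm
  rw [div_lt_div_iff₀ hN hxx]
  calc lam2 * (x ⬝ᵥ x) < lam2 * (N * (y ⬝ᵥ y)) := mul_lt_mul_of_pos_left hnorm hlam_pos
    _ = lam2 * (y ⬝ᵥ y) * N := by ring
    _ ≤ x ⬝ᵥ (Lhat *ᵥ x) * N := by rw [← hquad]; gcongr

/-- For the Laplacian L̂ of a connected undirected graph with smallest nonzero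
    eigenvalue λ₂: for any entrywise positive ξ and nonzero x with ξᵀx = 0,
    (xᵀ L̂ x)/(xᵀ x) > λ₂ / N. -/
theorem rayleigh_quotient_bound (N : ℕ) (hN : 0 < N)
    (Lhat : Matrix (Fin N) (Fin N) ℝ)
    (hsym : Lhat.IsSymm) (hpsd : Lhat.PosSemidef)
    (hrow : Lhat *ᵥ (fun _ => (1 : ℝ)) = 0)
    (hoff : ∀ i j, i ≠ j → Lhat i j ≤ 0)
    (hrank : Lhat.rank = N - 1)
    (lam2 : ℝ)
    (hlam : IsLeast {μ : ℝ | μ ≠ 0 ∧ ∃ x : Fin N → ℝ, x ≠ 0 ∧ Lhat *ᵥ x = μ • x} lam2)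
    (ξ x : Fin N → ℝ) (hξ : ∀ i, 0 < ξ i) (hx : x ≠ 0) (hperp : ξ ⬝ᵥ x = 0) :
    lam2 / N < (x ⬝ᵥ (Lhat *ᵥ x)) / (x ⬝ᵥ x) :=
  rayleigh_quotient_bound_general N Lhat hpsd hrow hrank lam2 hlam ξ x hξ hx hperp
end

section
/- For every nonsingular M-matrix L, there exists a positive diagonal matrix G = diag(g_1, ..., g_N) such that G·L + L^T·G is positive definite. -/
/-!
Write `L = s • 1 - B` with `B` entrywise nonnegative. For `δ ∈ [0, s⁻¹]` the matrix `1 - δ • B`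
is nonsingular, since otherwise `s - δ⁻¹ ≤ 0` would be a real eigenvalue of `L`. Entrywise
nonnegativity of `(1 - δ • B)⁻¹` holds at `δ = 0`, is a closed condition, and propagates to the
right by a Neumann series; at `δ = s⁻¹` this makes `L⁻¹` nonnegative. Then `x = L⁻¹ 1` and
`y = L⁻ᵀ 1` are positive with `L x = Lᵀ y = 1`, and `G = diag (y / x)` works:
`diag x * (G L + Lᵀ G) * diag x = A + Aᵀ` for `A = diag y * L * diag x`, a symmetric matrix with
nonpositive off-diagonal entries and positive row sums, hence positive definite.
-/

open Matrix Set Filter Topology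

namespace Matrix

variable {l m n : Type*}

def IsNonneg (M : Matrix m n ℝ) : Prop := ∀ i j, 0 ≤ M i j

theorem isClosed_setOf_isNonneg : IsClosed {M : Matrix m n ℝ | M.IsNonneg} := by
  simp only [IsNonneg, ofPred_forall]
  exact isClosed_iInter fun i => isClosed_iInter fun j =>
    isClosed_le continuous_const (by fun_prop)

namespace IsNonneg

theorem one [DecidableEq n] : (1 : Matrix n n ℝ).IsNonneg := fun i j => by
  rw [one_apply]
  split_ifs <;> norm_num

theorem mul [Fintype m] {A : Matrix l m ℝ} {B : Matrix m n ℝ} (hA : A.IsNonneg)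
    (hB : B.IsNonneg) : (A * B).IsNonneg := fun _ _ =>
  Finset.sum_nonneg fun _ _ => mul_nonneg (hA _ _) (hB _ _)

theorem pow [Fintype n] [DecidableEq n] {A : Matrix n n ℝ} (hA : A.IsNonneg) (k : ℕ) :
    (A ^ k).IsNonneg := by
  induction k with
  | zero => rw [pow_zero]; exact one
  | succ k ih => rw [pow_succ]; exact ih.mul hA

theorem smul {A : Matrix m n ℝ} (hA : A.IsNonneg) {c : ℝ} (hc : 0 ≤ c) : (c • A).IsNonneg :=
  fun i j => mul_nonneg hc (hA i j)

theorem transpose {A : Matrix m n ℝ} (hA : A.IsNonneg) : Aᵀ.IsNonneg := fun i j => hA j i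

variable [Fintype n] [DecidableEq n]

section Neumann

attribute [local instance] Matrix.linftyOpNormedAddCommGroup Matrix.linftyOpNormedRing
  Matrix.linftyOpNormedSpace

theorem exists_pos_inv_one_sub_smul {C : Matrix n n ℝ} (hC : C.IsNonneg) :
    ∃ ε : ℝ, 0 < ε ∧ ∀ η ∈ Ico 0 ε, (1 - η • C)⁻¹.IsNonneg := by
  refine ⟨(‖C‖ + 1)⁻¹, by positivity, fun η ⟨hη0, hηε⟩ => ?_⟩
  have hsmall : ‖η • C‖ < 1 := calc
    ‖η • C‖ ≤ ‖η‖ * ‖C‖ := norm_smul_le η C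
    _ ≤ η * (‖C‖ + 1) := by rw [Real.norm_of_nonneg hη0]; gcongr; linarith
    _ < 1 := by rwa [← lt_inv_mul_iff₀' (by positivity), mul_one]
  have hsum := (summable_geometric_of_norm_lt_one hsmall).hasSum
  rw [inv_eq_right_inv (mul_neg_geom_series _ hsmall)]
  exact fun i j => (Pi.hasSum.mp (Pi.hasSum.mp hsum i) j).nonneg fun k => (hC.smul hη0).pow k i j

end Neumann

theorem inv_one_sub_smul {B : Matrix n n ℝ} (hB : B.IsNonneg) {a : ℝ} (ha : 0 ≤ a)
    (hdet : ∀ δ ∈ Icc 0 a, (1 - δ • B).det ≠ 0) : (1 - a • B)⁻¹.IsNonneg := by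
  set S := {δ : ℝ | (1 - δ • B)⁻¹.IsNonneg}
  have hcont : ContinuousOn (fun δ : ℝ => (1 - δ • B)⁻¹) (Icc 0 a) := fun δ hδ => by
    refine ((continuousAt_matrix_inv _ ?_).comp (by fun_prop)).continuousWithinAt
    rw [Ring.inverse_eq_inv']
    exact continuousAt_inv₀ (hdet δ hδ)
  have hclosed : IsClosed (S ∩ Icc 0 a) := by
    rw [inter_comm]
    exact hcont.preimage_isClosed_of_isClosed isClosed_Icc isClosed_setOf_isNonneg
  have hstep : ∀ δ ∈ S ∩ Ico 0 a, S ∈ 𝓝[>] δ := by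
    rintro δ ⟨hδS, hδ0, hδa⟩
    set R := (1 - δ • B)⁻¹
    have hPR : (1 - δ • B) * R = 1 :=
      mul_nonsing_inv _ (isUnit_iff_ne_zero.mpr (hdet δ ⟨hδ0, hδa.le⟩))
    obtain ⟨ε, hε, hC⟩ := (hδS.mul hB).exists_pos_inv_one_sub_smul
    refine mem_of_superset (Ioo_mem_nhdsGT (lt_add_of_pos_right δ hε)) fun δ' ⟨h1, h2⟩ => ?_
    have hfactor : 1 - δ' • B = (1 - δ • B) * (1 - (δ' - δ) • (R * B)) := by
      rw [mul_sub, mul_one, mul_smul_comm, ← Matrix.mul_assoc, hPR, Matrix.one_mul, sub_smul]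
      abel
    show (1 - δ' • B)⁻¹.IsNonneg
    rw [hfactor, mul_inv_rev]
    exact (hC _ ⟨by linarith, by linarith⟩).mul hδS
  exact hclosed.Icc_subset_of_forall_mem_nhdsWithin (by simp [S, IsNonneg.one]) hstep
    ⟨ha, le_rfl⟩

end IsNonneg

variable [Fintype n]

theorem posDef_of_nonpos_offDiag_of_sum_pos {S : Matrix n n ℝ} (hS : S.IsHermitian)
    (hoff : ∀ i j, i ≠ j → S i j ≤ 0) (hrow : ∀ i, 0 < ∑ j, S i j) : S.PosDef := by
  refine .of_dotProduct_mulVec_pos hS fun u hu => ?_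
  have hswap : ∑ i, ∑ j, S i j * u j ^ 2 = ∑ i, ∑ j, S i j * u i ^ 2 := by
    rw [Finset.sum_comm]
    exact Finset.sum_congr rfl fun i _ => Finset.sum_congr rfl fun j _ => by
      rw [← hS.apply i j, star_trivial]
  have hexpand : ∑ i, ∑ j, S i j * (u i - u j) ^ 2
      = ∑ i, ∑ j, S i j * u i ^ 2 + ∑ i, ∑ j, S i j * u j ^ 2
        - 2 * ∑ i, ∑ j, S i j * u i * u j := by
    simp only [Finset.mul_sum, ← Finset.sum_add_distrib, ← Finset.sum_sub_distrib]
    exact Finset.sum_congr rfl fun i _ => Finset.sum_congr rfl fun j _ => by ring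
  have hquad : star u ⬝ᵥ (S *ᵥ u) = ∑ i, ∑ j, S i j * u i * u j := by
    simp only [dotProduct, mulVec, star_trivial, Finset.mul_sum]
    exact Finset.sum_congr rfl fun i _ => Finset.sum_congr rfl fun j _ => by ring
  have hdiag : 0 < ∑ i, ∑ j, S i j * u i ^ 2 := by
    obtain ⟨i₀, hi₀⟩ := Function.ne_iff.mp hu
    simp_rw [← Finset.sum_mul]
    exact Finset.sum_pos' (fun i _ => mul_nonneg (hrow i).le (sq_nonneg _))
      ⟨i₀, Finset.mem_univ _, mul_pos (hrow i₀) (sq_pos_of_ne_zero hi₀)⟩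
  have hcross : ∑ i, ∑ j, S i j * (u i - u j) ^ 2 ≤ 0 :=
    Finset.sum_nonpos fun i _ => Finset.sum_nonpos fun j _ => by
      rcases eq_or_ne i j with rfl | hij
      · simp
      · exact mul_nonpos_of_nonpos_of_nonneg (hoff i j hij) (sq_nonneg _)
  rw [hquad]
  linarith

variable [DecidableEq n]

theorem exists_isNonneg_mul_eq_one_of_nonpos_offDiag {L : Matrix n n ℝ}
    (hoff : ∀ i j, i ≠ j → L i j ≤ 0)
    (heig : ∀ (μ : ℝ) (v : n → ℝ), v ≠ 0 → L *ᵥ v = μ • v → 0 < μ) :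
    ∃ R : Matrix n n ℝ, R.IsNonneg ∧ L * R = 1 := by
  obtain ⟨s, hs, hdiag⟩ : ∃ s : ℝ, 0 < s ∧ ∀ i, L i i ≤ s :=
    ⟨∑ i, |L i i| + 1, by positivity, fun i => by
      have := Finset.single_le_sum (fun j _ => abs_nonneg (L j j)) (Finset.mem_univ i)
      linarith [le_abs_self (L i i)]⟩
  set B := s • 1 - L
  have hB : B.IsNonneg := fun i j => by
    rcases eq_or_ne i j with rfl | hij
    · simp [B, hdiag i]
    · simp [B, one_apply_ne hij, hoff i j hij]
  -- a kernel vector of `1 - δ • B` is an eigenvector of `L` for the eigenvalue `s - δ⁻¹ ≤ 0`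
  have hdet : ∀ δ ∈ Icc 0 s⁻¹, (1 - δ • B).det ≠ 0 := by
    rintro δ ⟨hδ0, hδs⟩ hdet
    obtain ⟨v, hv, hPv⟩ := exists_mulVec_eq_zero_iff.mpr hdet
    have hv' : v = δ • (s • v - L *ᵥ v) := by
      simpa [B, sub_mulVec, smul_mulVec, sub_eq_zero] using hPv
    have hδ : 0 < δ := lt_of_le_of_ne hδ0 fun h => hv (by simpa [← h] using hv')
    refine (heig (s - δ⁻¹) v hv ?_).not_ge (by linarith [(le_inv_comm₀ hδ hs).mp hδs])
    ext i
    have := congrFun hv' i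
    simp only [Pi.smul_apply, Pi.sub_apply, smul_eq_mul] at this ⊢
    field_simp
    linarith
  refine ⟨s⁻¹ • (1 - s⁻¹ • B)⁻¹,
    (IsNonneg.inv_one_sub_smul hB (by positivity) hdet).smul (by positivity), ?_⟩
  have hL : L = s • (1 - s⁻¹ • B) := by simp [B, smul_sub, smul_smul, hs.ne']
  rw [hL, smul_mul_smul_comm, mul_inv_cancel₀ hs.ne', one_smul,
    mul_nonsing_inv _ (isUnit_iff_ne_zero.mpr (hdet s⁻¹ ⟨by positivity, le_rfl⟩))]

theorem exists_pos_mulVec_eq_one {P R : Matrix n n ℝ} (hR : R.IsNonneg) (hPR : P * R = 1) :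
    ∃ x : n → ℝ, (∀ i, 0 < x i) ∧ P *ᵥ x = 1 := by
  refine ⟨R *ᵥ 1, fun i => ?_, by rw [mulVec_mulVec, hPR, one_mulVec]⟩
  refine (Finset.sum_nonneg fun j _ => ?_).lt_of_ne fun hzero => ?_
  · simpa using hR i j
  -- a zero row of `R` is incompatible with `R * P = 1`
  have hrow : ∀ j, R i j = 0 := fun j => by
    simpa using (Finset.sum_eq_zero_iff_of_nonneg (fun j _ => by simpa using hR i j)).mp
      hzero.symm j (Finset.mem_univ j)
  have hRP : R * P = 1 := mul_eq_one_comm.mp hPR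
  simpa [mul_apply, hrow] using congrFun (congrFun hRP i) i

theorem posDef_diagonal_mul_add_transpose_mul_diagonal {L : Matrix n n ℝ}
    (hoff : ∀ i j, i ≠ j → L i j ≤ 0) {x y : n → ℝ} (hx : ∀ i, 0 < x i) (hy : ∀ i, 0 < y i)
    (hLx : ∀ i, 0 < (L *ᵥ x) i) (hLy : ∀ i, 0 < (Lᵀ *ᵥ y) i) :
    (diagonal (fun i => y i / x i) * L + Lᵀ * diagonal (fun i => y i / x i)).PosDef := by
  set A := diagonal y * L * diagonal x
  have hA : (A + Aᵀ).PosDef := by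
    refine posDef_of_nonpos_offDiag_of_sum_pos ?_ (fun i j hij => ?_) (fun i => ?_)
    · simpa [conjTranspose_eq_transpose_of_trivial] using isHermitian_add_transpose_self A
    · have h1 := mul_nonpos_of_nonpos_of_nonneg (hoff i j hij) (mul_pos (hy i) (hx j)).le
      have h2 := mul_nonpos_of_nonpos_of_nonneg (hoff j i hij.symm) (mul_pos (hy j) (hx i)).le
      simp only [A, add_apply, transpose_apply, diagonal_mul, mul_diagonal]
      linarith
    · have hsum : ∑ j, (A + Aᵀ) i j = y i * (L *ᵥ x) i + x i * (Lᵀ *ᵥ y) i := by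
        simp only [A, add_apply, transpose_apply, diagonal_mul, mul_diagonal, mulVec,
          dotProduct, Finset.mul_sum, ← Finset.sum_add_distrib]
        exact Finset.sum_congr rfl fun j _ => by ring
      rw [hsum]
      nlinarith [hx i, hy i, hLx i, hLy i]
  have hD : Function.Injective (diagonal x⁻¹).mulVec := mulVec_injective_of_isUnit
    (isUnit_diagonal.mpr (Pi.isUnit_iff.mpr fun i => (hx i).ne'.isUnit.inv))
  convert hA.conjTranspose_mul_mul_same hD using 1
  ext i j
  have := (hx i).ne'
  have := (hx j).ne'
  simp only [A, conjTranspose_eq_transpose_of_trivial, diagonal_transpose, add_apply,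
    transpose_apply, diagonal_mul, mul_diagonal, Pi.inv_apply]
  field_simp

end Matrix

/-- For every nonsingular M-matrix L there exists a positive diagonal G with
    G L + Lᵀ G positive definite. -/
theorem M_matrix_diagonal_lyapunov (N : ℕ) (L : Matrix (Fin N) (Fin N) ℝ)
    (hoff : ∀ i j, i ≠ j → L i j ≤ 0)
    (heig : ∀ μ : ℂ, (∃ v : Fin N → ℂ, v ≠ 0 ∧ (L.map Complex.ofReal) *ᵥ v = μ • v) →
      0 < μ.re) :
    ∃ g : Fin N → ℝ, (∀ i, 0 < g i) ∧
      (Matrix.diagonal g * L + Lᵀ * Matrix.diagonal g).PosDef := by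
  have heig_real : ∀ (μ : ℝ) (v : Fin N → ℝ), v ≠ 0 → L *ᵥ v = μ • v → 0 < μ := by
    intro μ v hv hLv
    refine Complex.ofReal_re μ ▸ heig μ ⟨Complex.ofReal ∘ v, ?_, ?_⟩
    · exact fun h => hv (funext fun i => Complex.ofReal_injective (congrFun h i))
    · ext i
      simpa [mulVec, dotProduct] using congrArg Complex.ofReal (congrFun hLv i)
  obtain ⟨R, hR, hLR⟩ := exists_isNonneg_mul_eq_one_of_nonpos_offDiag hoff heig_real
  obtain ⟨x, hx, hLx⟩ := exists_pos_mulVec_eq_one hR hLR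
  obtain ⟨y, hy, hLy⟩ := exists_pos_mulVec_eq_one hR.transpose
    (by rw [← transpose_mul, mul_eq_one_comm.mp hLR, transpose_one])
  exact ⟨fun i => y i / x i, fun i => div_pos (hy i) (hx i),
    posDef_diagonal_mul_add_transpose_mul_diagonal hoff hx hy (by simp [hLx]) (by simp [hLy])⟩
end

section
/- There exists a symmetric positive definite solution S to the linear matrix inequality A^T S + S A - 2 C^T C < 0 if and only if the pair (A, C) is detectable. -/
/-!
If `S` solves the LMI, the gain `F = -S⁻¹Cᵀ` turns it into the Lyapunov inequality
`(A + FC)ᵀS + S(A + FC) < 0`, and `v* S v > 0` forces every eigenvalue of `A + FC` into the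
open left half-plane.

Conversely, if `M = A + FC` is Hurwitz, its Cayley transform `T = (1 - M)⁻¹(1 + M)` has its
spectrum in the open unit disc, so Gelfand's formula gives `‖T ^ N‖ < 1` for some `N`. The
truncated Stein sum `P = ∑_{k<N} (T^k)ᵀ T^k` then satisfies `TᵀPT < P`, which is the Lyapunov
inequality for `M`. Finally `S = 2εP` solves the LMI for small `ε > 0`: completing the square,
`-(AᵀS + SA - 2CᵀC) = 2ε(Q - ε PFFᵀP) + 2GᵀG` with `Q = -(MᵀP + PM)` and `G = C + εFᵀP`.
-/

open Matrix Finset Filter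
open scoped ComplexOrder MatrixOrder Matrix.Norms.L2Operator

theorem spectrum.exists_norm_pow_lt_one {A : Type*} [NormedRing A] [NormedAlgebra ℂ A]
    [CompleteSpace A] (a : A) (h : ∀ z ∈ spectrum ℂ a, ‖z‖ < 1) : ∃ N, ‖a ^ N‖ < 1 := by
  nontriviality A
  have hρ : spectralRadius ℂ a < (1 : NNReal) := spectrum.spectralRadius_lt_of_forall_lt a h
  obtain ⟨N, hN, hN1⟩ := ((pow_norm_pow_one_div_tendsto_nhds_spectralRadius a).eventually
    (gt_mem_nhds hρ) |>.and (eventually_ge_atTop 1)).exists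
  refine ⟨N, not_le.mp fun h1 => ?_⟩
  have := Real.one_le_rpow h1 (by positivity : (0 : ℝ) ≤ 1 / N)
  simp only [ENNReal.coe_one, ENNReal.ofReal_lt_one] at hN
  linarith

theorem Complex.norm_lt_one_of_re_div_neg {z : ℂ} (h : ((z - 1) / (z + 1)).re < 0) :
    ‖z‖ < 1 := by
  rw [Complex.div_re, ← add_div] at h
  have hz : Complex.normSq z < 1 := by
    have := (div_neg_iff.mp h).resolve_left
      fun h' => (h'.2.trans_le (Complex.normSq_nonneg _)).false.elim
    simp only [Complex.sub_re, Complex.one_re, Complex.add_re, Complex.sub_im, Complex.one_im,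
      sub_zero, Complex.add_im, add_zero] at this
    rw [Complex.normSq_apply]
    nlinarith [this.1]
  rwa [← sq_lt_one_iff₀ (norm_nonneg z), Complex.sq_norm]

/-- Conjugating the Stein operator of the Cayley transform `t = (1 - m)⁻¹(1 + m)` gives twice
the Lyapunov operator of `m`. -/
theorem cayley_stein_eq_two_mul_lyapunov {R : Type*} [Ring R] [StarRing R] {m t : R} (p : R)
    (ht : t * (1 - m) = 1 + m) :
    star (1 - m) * (star t * p * t - p) * (1 - m) = 2 * (star m * p + p * m) := by
  have h : star (1 - m) * star t = star (1 + m) := by rw [← star_mul, ht]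
  calc star (1 - m) * (star t * p * t - p) * (1 - m)
      = (star (1 - m) * star t) * p * (t * (1 - m)) - star (1 - m) * p * (1 - m) := by
        noncomm_ring
    _ = _ := by
        rw [h, ht]
        simp only [star_sub, star_add, star_one]
        noncomm_ring

namespace Matrix

section RCLike

variable {𝕜 : Type*} [RCLike 𝕜] {n m : Type*} [Fintype n] [Fintype m] [DecidableEq n]

omit [DecidableEq n] in
theorem star_dotProduct_self_eq_norm_sq (x : n → 𝕜) :
    star x ⬝ᵥ x = (‖WithLp.toLp 2 x‖ : 𝕜) ^ 2 := by
  rw [← inner_self_eq_norm_sq_to_K, EuclideanSpace.inner_toLp_toLp, dotProduct_comm]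

theorem posDef_one_sub_conjTranspose_mul_self_of_norm_lt_one {K : Matrix m n 𝕜} (hK : ‖K‖ < 1) :
    (1 - Kᴴ * K).PosDef := by
  refine .of_dotProduct_mulVec_pos (isHermitian_one.sub (isHermitian_conjTranspose_mul_self K))
    fun x hx => ?_
  have hx0 : 0 < ‖WithLp.toLp 2 x‖ := by simpa using hx
  have hKx : ‖WithLp.toLp 2 (K *ᵥ x)‖ < ‖WithLp.toLp 2 x‖ :=
    (K.l2_opNorm_mulVec (WithLp.toLp 2 x)).trans_lt (by nlinarith [norm_nonneg K])
  rw [sub_mulVec, one_mulVec, dotProduct_sub, ← mulVec_mulVec, dotProduct_mulVec, ← star_mulVec,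
    star_dotProduct_self_eq_norm_sq, star_dotProduct_self_eq_norm_sq, sub_pos]
  exact_mod_cast pow_lt_pow_left₀ hKx (norm_nonneg _) two_ne_zero

theorem PosDef.exists_posDef_sub_smul_conjTranspose_mul_self {Q : Matrix n n 𝕜}
    (hQ : Q.PosDef) (B : Matrix m n 𝕜) : ∃ ε : ℝ, 0 < ε ∧ (Q - ε • (Bᴴ * B)).PosDef := by
  obtain ⟨L, rfl⟩ := CStarAlgebra.nonneg_iff_eq_star_mul_self.mp hQ.posSemidef.nonneg
  have hL : IsUnit L.det := by
    have := (isUnit_iff_isUnit_det _).mp hQ.isUnit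
    rw [det_mul] at this
    exact isUnit_of_mul_isUnit_right this
  set δ : ℝ := (‖B * L⁻¹‖ + 1)⁻¹
  have hδ : 0 < δ := by positivity
  have hnorm : ‖(δ : 𝕜) • (B * L⁻¹)‖ < 1 := by
    rw [norm_smul, RCLike.norm_ofReal, abs_of_pos hδ, inv_mul_lt_one₀ (by positivity)]
    linarith
  refine ⟨δ ^ 2, by positivity, ?_⟩
  have hLL : L⁻¹ * L = 1 := nonsing_inv_mul L hL
  have hLL' : star L * L⁻¹ᴴ = 1 := by
    rw [star_eq_conjTranspose, ← conjTranspose_mul, hLL, conjTranspose_one]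
  have key : star L * L - δ ^ 2 • (Bᴴ * B) =
      star L * (1 - ((δ : 𝕜) • (B * L⁻¹))ᴴ * ((δ : 𝕜) • (B * L⁻¹))) * L := by
    simp only [conjTranspose_smul, conjTranspose_mul, RCLike.star_def, RCLike.conj_ofReal,
      mul_sub, sub_mul, mul_one, Matrix.mul_smul, Matrix.smul_mul, smul_smul, ← Matrix.mul_assoc,
      hLL', Matrix.one_mul]
    simp only [Matrix.mul_assoc, hLL, Matrix.mul_one]
    rw [RCLike.real_smul_eq_coe_smul (K := 𝕜)]
    push_cast
    ring_nf
  rw [key, ((isUnit_iff_isUnit_det L).mpr hL).posDef_star_left_conjugate_iff]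
  exact posDef_one_sub_conjTranspose_mul_self_of_norm_lt_one hnorm

theorem exists_posDef_stein_of_posDef_one_sub_pow (T : Matrix n n 𝕜) {N : ℕ}
    (h : (1 - (T ^ N)ᴴ * T ^ N).PosDef) :
    ∃ P : Matrix n n 𝕜, P.PosDef ∧ (P - Tᴴ * P * T).PosDef := by
  set P := ∑ k ∈ range N, (T ^ k)ᴴ * T ^ k
  have hstein : P - Tᴴ * P * T = 1 - (T ^ N)ᴴ * T ^ N := by
    have : Tᴴ * P * T = ∑ k ∈ range N, (T ^ (k + 1))ᴴ * T ^ (k + 1) := by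
      simp only [P, Finset.mul_sum, Finset.sum_mul, pow_succ, conjTranspose_mul, Matrix.mul_assoc]
    rw [this, ← Finset.sum_sub_distrib, Finset.sum_range_sub' (fun k => (T ^ k)ᴴ * T ^ k)]
    simp
  have hPT : (P - Tᴴ * P * T).PosDef := hstein ▸ h
  have hP : P.PosSemidef := posSemidef_sum _ fun k _ => posSemidef_conjTranspose_mul_self _
  refine ⟨P, ?_, hPT⟩
  simpa using hPT.add_posSemidef (hP.conjTranspose_mul_mul_same T)

theorem posDef_neg_lyapunov_of_posDef_stein {M T P : Matrix n n 𝕜} (hM : IsUnit (1 - M))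
    (hT : T * (1 - M) = 1 + M) (hP : (P - Tᴴ * P * T).PosDef) :
    (-(Mᴴ * P + P * M)).PosDef := by
  have key : (1 - M)ᴴ * (P - Tᴴ * P * T) * (1 - M) = -(2 * (Mᴴ * P + P * M)) := by
    rw [← neg_sub (Tᴴ * P * T), Matrix.mul_neg, Matrix.neg_mul, ← star_eq_conjTranspose,
      ← star_eq_conjTranspose, cayley_stein_eq_two_mul_lyapunov P hT, star_eq_conjTranspose]
  have : -(Mᴴ * P + P * M) = (2⁻¹ : ℝ) • ((1 - M)ᴴ * (P - Tᴴ * P * T) * (1 - M)) := by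
    rw [key, two_mul]
    module
  rw [this]
  exact (hM.posDef_star_left_conjugate_iff.mpr hP).smul (by norm_num)

end RCLike

variable {n m : Type*} [Fintype n] [Fintype m] [DecidableEq n]

def IsHurwitz (M : Matrix n n ℂ) : Prop :=
  ∀ μ : ℂ, (∃ v : n → ℂ, v ≠ 0 ∧ M *ᵥ v = μ • v) → μ.re < 0

omit [DecidableEq n] in
theorem IsHurwitz.of_posDef_lyapunov {M P : Matrix n n ℂ} (hP : P.PosDef)
    (hQ : (-(Mᴴ * P + P * M)).PosDef) : M.IsHurwitz := by
  rintro μ ⟨v, hv, hMv⟩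
  have key : star v ⬝ᵥ (-(Mᴴ * P + P * M)) *ᵥ v = -(2 * μ.re : ℝ) * (star v ⬝ᵥ P *ᵥ v) := by
    rw [neg_mulVec, add_mulVec, ← mulVec_mulVec, ← mulVec_mulVec, dotProduct_neg, dotProduct_add,
      dotProduct_mulVec, ← star_mulVec, hMv, star_smul, smul_dotProduct, mulVec_smul,
      dotProduct_smul, smul_eq_mul, smul_eq_mul, ← Complex.add_conj μ]
    simp only [Complex.star_def]
    ring
  have hq := hQ.dotProduct_mulVec_pos hv
  rw [key] at hq
  by_contra! hμ
  have : (-(2 * μ.re : ℝ) : ℂ) ≤ 0 := by exact_mod_cast (by linarith : -(2 * μ.re) ≤ 0)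
  exact (mul_nonpos_of_nonpos_of_nonneg this (hP.dotProduct_mulVec_pos hv).le).not_gt hq

theorem IsHurwitz.isUnit_one_sub {M : Matrix n n ℂ} (hM : M.IsHurwitz) : IsUnit (1 - M) := by
  rw [isUnit_iff_isUnit_det, isUnit_iff_ne_zero]
  intro h
  obtain ⟨v, hv, hMv⟩ := exists_mulVec_eq_zero_iff.mpr h
  rw [sub_mulVec, one_mulVec, sub_eq_zero] at hMv
  have := hM 1 ⟨v, hv, by rw [one_smul, ← hMv]⟩
  norm_num at this

theorem IsHurwitz.norm_lt_one_of_mem_spectrum {M T : Matrix n n ℂ} (hM : M.IsHurwitz)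
    (hT : (1 - M) * T = 1 + M) {z : ℂ} (hz : z ∈ spectrum ℂ T) : ‖z‖ < 1 := by
  rw [← spectrum_toLin', ← Module.End.hasEigenvalue_iff_mem_spectrum] at hz
  obtain ⟨v, hv⟩ := hz.exists_hasEigenvector
  have hTv : T *ᵥ v = z • v := by simpa using hv.apply_eq_smul
  have hMv : (z + 1) • (M *ᵥ v) = (z - 1) • v := by
    have := congrArg (· *ᵥ v) hT
    simp only [← mulVec_mulVec, hTv, sub_mulVec, add_mulVec, one_mulVec, mulVec_smul] at this
    rw [add_smul, sub_smul, one_smul, one_smul]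
    linear_combination (norm := module) -this
  have hz1 : z + 1 ≠ 0 := by
    intro h0
    rw [h0, zero_smul, eq_comm, smul_eq_zero, sub_eq_zero] at hMv
    rcases hMv with h1 | hv0
    · norm_num [h1] at h0
    · exact hv.2 hv0
  apply Complex.norm_lt_one_of_re_div_neg
  refine hM _ ⟨v, hv.2, ?_⟩
  rw [div_eq_inv_mul, mul_smul, ← hMv, smul_smul, inv_mul_cancel₀ hz1, one_smul]

theorem ofRealHom_mapMatrix_transpose (A : Matrix n n ℝ) :
    Complex.ofRealHom.mapMatrix Aᵀ = (Complex.ofRealHom.mapMatrix A)ᴴ := by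
  ext
  simp

theorem posDef_ofRealHom_mapMatrix_iff {S : Matrix n n ℝ} :
    (Complex.ofRealHom.mapMatrix S).PosDef ↔ S.PosDef := by
  constructor
  · intro h
    refine .of_dotProduct_mulVec_pos ?_ fun x hx => ?_
    · ext i j
      simpa using congrFun₂ h.isHermitian.eq i j
    · have hx' : (fun i => (x i : ℂ)) ≠ 0 := fun h0 =>
        hx (funext fun i => by simpa using congrFun h0 i)
      have e : star (fun i => (x i : ℂ)) ⬝ᵥ Complex.ofRealHom.mapMatrix S *ᵥ (fun i => (x i : ℂ)) =
          ((star x ⬝ᵥ S *ᵥ x : ℝ) : ℂ) := by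
        simp [dotProduct, mulVec]
      have := h.dotProduct_mulVec_pos hx'
      rw [e] at this
      exact_mod_cast this
  · intro h
    obtain ⟨B, rfl⟩ := CStarAlgebra.nonneg_iff_eq_star_mul_self.mp h.posSemidef.nonneg
    rw [star_eq_conjTranspose, conjTranspose_eq_transpose_of_trivial] at h ⊢
    rw [map_mul, ofRealHom_mapMatrix_transpose,
      (posSemidef_conjTranspose_mul_self _).posDef_iff_det_ne_zero,
      ← ofRealHom_mapMatrix_transpose, ← map_mul, ← RingHom.map_det]
    simpa using h.det_pos.ne'

theorem isHurwitz_ofRealHom_mapMatrix_of_posDef_lyapunov {M P : Matrix n n ℝ} (hP : P.PosDef)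
    (hQ : (-(Mᵀ * P + P * M)).PosDef) : (Complex.ofRealHom.mapMatrix M).IsHurwitz := by
  refine IsHurwitz.of_posDef_lyapunov (posDef_ofRealHom_mapMatrix_iff.mpr hP) ?_
  rw [← ofRealHom_mapMatrix_transpose, ← map_mul, ← map_mul, ← map_add, ← map_neg]
  exact posDef_ofRealHom_mapMatrix_iff.mpr hQ

theorem exists_posDef_lyapunov_of_isHurwitz {M : Matrix n n ℝ}
    (hM : (Complex.ofRealHom.mapMatrix M).IsHurwitz) :
    ∃ P : Matrix n n ℝ, P.PosDef ∧ (-(Mᵀ * P + P * M)).PosDef := by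
  have hdet : IsUnit (1 - M).det := by
    have := (isUnit_iff_isUnit_det _).mp hM.isUnit_one_sub
    rw [← map_one Complex.ofRealHom.mapMatrix, ← map_sub, ← RingHom.map_det] at this
    simpa using this
  set T := (1 - M)⁻¹ * (1 + M)
  have hT : (1 - M) * T = 1 + M := mul_nonsing_inv_cancel_left _ _ hdet
  have hT' : T * (1 - M) = 1 + M := by
    rw [Matrix.mul_assoc, show (1 + M) * (1 - M) = (1 - M) * (1 + M) by noncomm_ring,
      nonsing_inv_mul_cancel_left _ _ hdet]
  have hTℂ := congrArg Complex.ofRealHom.mapMatrix hT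
  rw [map_mul, map_sub, map_add, map_one] at hTℂ
  obtain ⟨N, hN⟩ := spectrum.exists_norm_pow_lt_one _ fun z hz =>
    hM.norm_lt_one_of_mem_spectrum hTℂ hz
  have hTN : (1 - (T ^ N)ᴴ * T ^ N).PosDef := by
    rw [← posDef_ofRealHom_mapMatrix_iff, map_sub, map_one, map_mul,
      conjTranspose_eq_transpose_of_trivial, ofRealHom_mapMatrix_transpose, map_pow]
    exact posDef_one_sub_conjTranspose_mul_self_of_norm_lt_one hN
  obtain ⟨P, hP, hPT⟩ := exists_posDef_stein_of_posDef_one_sub_pow T hTN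
  refine ⟨P, hP, ?_⟩
  rw [← conjTranspose_eq_transpose_of_trivial]
  exact posDef_neg_lyapunov_of_posDef_stein ((isUnit_iff_isUnit_det _).mpr hdet) hT' hPT

omit [DecidableEq n] in
theorem lyapunov_add_mul_of_mul_eq_neg_transpose {A S : Matrix n n ℝ} {C : Matrix m n ℝ}
    {F : Matrix n m ℝ} (hS : S.IsSymm) (hF : S * F = -Cᵀ) :
    (A + F * C)ᵀ * S + S * (A + F * C) = Aᵀ * S + S * A - (2 : ℝ) • (Cᵀ * C) := by
  have hF' : Fᵀ * S = -C := by
    rw [← hS.eq, ← transpose_mul, hF, transpose_neg, transpose_transpose]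
  rw [transpose_add, transpose_mul, add_mul, mul_add, Matrix.mul_assoc, hF', ← Matrix.mul_assoc,
    hF]
  simp only [Matrix.mul_neg, Matrix.neg_mul]
  module

omit [DecidableEq n] in
theorem neg_lmi_smul_eq {A P : Matrix n n ℝ} {C : Matrix m n ℝ} (F : Matrix n m ℝ)
    (hP : P.IsSymm) (ε : ℝ) :
    -(Aᵀ * ((2 * ε) • P) + ((2 * ε) • P) * A - (2 : ℝ) • (Cᵀ * C)) =
      (2 * ε) • (-((A + F * C)ᵀ * P + P * (A + F * C)) - ε • ((Fᵀ * P)ᵀ * (Fᵀ * P))) +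
        (2 : ℝ) • ((C + ε • (Fᵀ * P))ᵀ * (C + ε • (Fᵀ * P))) := by
  simp only [transpose_add, transpose_mul, transpose_smul, transpose_transpose, hP.eq,
    Matrix.add_mul, Matrix.mul_add, Matrix.mul_smul, Matrix.smul_mul, Matrix.mul_assoc]
  module

end Matrix

/-- There exists a positive definite solution S to AᵀS + SA - 2CᵀC < 0 if and only if
    the pair (A, C) is detectable, i.e. some F makes A + FC Hurwitz. -/
theorem lmi_solvable_iff_detectable (n m : ℕ)
    (A : Matrix (Fin n) (Fin n) ℝ) (C : Matrix (Fin m) (Fin n) ℝ) :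
    (∃ S : Matrix (Fin n) (Fin n) ℝ, S.PosDef ∧
        (-(Aᵀ * S + S * A - (2 : ℝ) • (Cᵀ * C))).PosDef) ↔
      (∃ F : Matrix (Fin n) (Fin m) ℝ,
        ∀ μ : ℂ, (∃ v : Fin n → ℂ, v ≠ 0 ∧
            ((A + F * C).map Complex.ofReal) *ᵥ v = μ • v) → μ.re < 0) := by
  constructor
  · rintro ⟨S, hS, hQ⟩
    have hSF : S * -(S⁻¹ * Cᵀ) = -Cᵀ := by
      rw [Matrix.mul_neg, mul_nonsing_inv_cancel_left _ _ hS.det_pos.ne'.isUnit]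
    refine ⟨_, isHurwitz_ofRealHom_mapMatrix_of_posDef_lyapunov (M := A + -(S⁻¹ * Cᵀ) * C) hS ?_⟩
    rwa [lyapunov_add_mul_of_mul_eq_neg_transpose (isHermitian_iff_isSymm.mp hS.isHermitian) hSF]
  · rintro ⟨F, hF⟩
    obtain ⟨P, hP, hQ⟩ := exists_posDef_lyapunov_of_isHurwitz (M := A + F * C) hF
    obtain ⟨ε, hε, hQε⟩ := hQ.exists_posDef_sub_smul_conjTranspose_mul_self (Fᵀ * P)
    rw [conjTranspose_eq_transpose_of_trivial] at hQε
    refine ⟨(2 * ε) • P, hP.smul (by positivity), ?_⟩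
    rw [neg_lmi_smul_eq F (isHermitian_iff_isSymm.mp hP.isHermitian) ε]
    exact (hQε.smul (by positivity)).add_posSemidef
      ((posSemidef_conjTranspose_mul_self _).smul zero_le_two)
end
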